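/- arXiv:hep-th/0411010 — 3 statements merged into one kernel-verified Lean document; each statement's English description precedes it below -/
import Mathlib

section
/- The map f : S² × Sp(1) → S² × S², f(x,q) = (x, q x q*), is a principal S¹-bundle, where S¹ acts on S² × Sp(1) on the right by ρ(x, y, λ) = (x, y·𝔮(x,λ)); in particular, the action ρ is free, and f(x,q) = f(x,q') if and only if q' = q·𝔮(x,λ) for some λ ∈ S¹. -/
noncomputable section
open Classical

/-- The quaternion unit `i`. -/
def qi : Quaternion ℝ := ⟨0, 1, 0, 0⟩

/-- The 2-sphere of unit purely imaginary quaternions. -/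
def S2q : Set (Quaternion ℝ) := {x | x.re = 0 ∧ ‖x‖ = 1}

/-- The circle of unit complex numbers `a + b i` inside the quaternions. -/
def S1q : Set (Quaternion ℝ) := {l | l.imJ = 0 ∧ l.imK = 0 ∧ ‖l‖ = 1}

/-- A choice of unit quaternion conjugating `i` to `x` (when one exists). -/
def conjRep (x : Quaternion ℝ) : Quaternion ℝ :=
  if h : ∃ q : Quaternion ℝ, ‖q‖ = 1 ∧ q * qi * star q = x then h.choose else 1

/-- The map `𝔮 : S² × S¹ → Sp(1)`, `𝔮(x,λ) = q λ q*` where `x = q i q*`. -/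
def qMap (x l : Quaternion ℝ) : Quaternion ℝ := conjRep x * l * star (conjRep x)

end

noncomputable section
open Quaternion

lemma normSq_of_unit {q : Quaternion ℝ} (h : ‖q‖ = 1) : normSq q = 1 := by
  rw [normSq_eq_norm_mul_self, h, one_mul]

lemma unit_of_normSq {q : Quaternion ℝ} (h : normSq q = 1) : ‖q‖ = 1 := by
  have h2 := normSq_eq_norm_mul_self q
  nlinarith [norm_nonneg q]

lemma unit_mul_star {q : Quaternion ℝ} (h : ‖q‖ = 1) : q * star q = 1 := by
  rw [Quaternion.self_mul_star, normSq_of_unit h]; norm_num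

lemma star_mul_unit {q : Quaternion ℝ} (h : ‖q‖ = 1) : star q * q = 1 := by
  rw [Quaternion.star_mul_self, normSq_of_unit h]; norm_num

abbrev QA := QuaternionAlgebra ℝ (-1) 0 (-1)

lemma qre_mul (a b : QA) :
    (@HMul.hMul (Quaternion ℝ) (Quaternion ℝ) (Quaternion ℝ) _ a b).re = a.re * b.re - a.imI * b.imI - a.imJ * b.imJ - a.imK * b.imK := by
  have := Quaternion.re_mul (R := ℝ) a b
  exact this.trans (by ring)

lemma qimI_mul (a b : QA) :
    (@HMul.hMul (Quaternion ℝ) (Quaternion ℝ) (Quaternion ℝ) _ a b).imI = a.re * b.imI + a.imI * b.re + a.imJ * b.imK - a.imK * b.imJ := by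
  have := Quaternion.imI_mul (R := ℝ) a b
  exact this.trans (by ring)

lemma qimJ_mul (a b : QA) :
    (@HMul.hMul (Quaternion ℝ) (Quaternion ℝ) (Quaternion ℝ) _ a b).imJ = a.re * b.imJ - a.imI * b.imK + a.imJ * b.re + a.imK * b.imI := by
  have := Quaternion.imJ_mul (R := ℝ) a b
  exact this.trans (by ring)

lemma qimK_mul (a b : QA) :
    (@HMul.hMul (Quaternion ℝ) (Quaternion ℝ) (Quaternion ℝ) _ a b).imK = a.re * b.imK + a.imI * b.imJ - a.imJ * b.imI + a.imK * b.re := by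
  have := Quaternion.imK_mul (R := ℝ) a b
  exact this.trans (by ring)

lemma qre_star (a : QA) : (@star (Quaternion ℝ) _ a).re = a.re :=
  Quaternion.re_star (R := ℝ) a

lemma qimI_star (a : QA) : (@star (Quaternion ℝ) _ a).imI = -a.imI :=
  Quaternion.imI_star (R := ℝ) a

lemma qimJ_star (a : QA) : (@star (Quaternion ℝ) _ a).imJ = -a.imJ :=
  Quaternion.imJ_star (R := ℝ) a

lemma qimK_star (a : QA) : (@star (Quaternion ℝ) _ a).imK = -a.imK :=
  Quaternion.imK_star (R := ℝ) a

lemma exists_conj (x : Quaternion ℝ) (h0 : x.re = 0) (h1 : ‖x‖ = 1) :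
    ∃ q : Quaternion ℝ, ‖q‖ = 1 ∧ q * qi * star q = x := by
  have hn := normSq_of_unit h1
  rw [normSq_def'] at hn
  obtain ⟨a, b, c, d⟩ := x
  simp only at h0
  subst h0
  simp only at hn
  rw [show (0:ℝ)^2 + b^2 + c^2 + d^2 = b^2+c^2+d^2 by ring] at hn
  by_cases hb : b = -1
  · subst hb
    have hc : c = 0 := by nlinarith
    have hd : d = 0 := by nlinarith
    refine ⟨(⟨0,0,1,0⟩ : Quaternion ℝ), unit_of_normSq (by rw [normSq_def' (⟨0,0,1,0⟩ : Quaternion ℝ)]; norm_num), ?_⟩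
    subst hc; subst hd
    ext <;> simp [qi, Quaternion.re_mul, Quaternion.imI_mul, Quaternion.imJ_mul,
      Quaternion.imK_mul, qre_mul, qimI_mul, qimJ_mul, qimK_mul, qre_star, qimI_star, qimJ_star, qimK_star]
  · have hb1 : -1 < b := by
      rcases lt_or_eq_of_le (show -1 ≤ b by nlinarith) with h | h
      · exact h
      · exact absurd h.symm hb
    set u : Quaternion ℝ := ⟨0, 1+b, c, d⟩ with hu
    have key : u * qi * star u = (2+2*b) • (⟨0,b,c,d⟩ : Quaternion ℝ) := by
      ext <;> simp [hu, qi, Quaternion.re_mul, Quaternion.imI_mul, Quaternion.imJ_mul,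
        Quaternion.imK_mul, qre_mul, qimI_mul, qimJ_mul, qimK_mul, qre_star, qimI_star, qimJ_star, qimK_star] <;> ring_nf <;> linear_combination -hn
    set n : ℝ := Real.sqrt (2+2*b) with hnn
    have hpos : (0:ℝ) < 2+2*b := by linarith
    have hn2 : n^2 = 2+2*b := Real.sq_sqrt hpos.le
    have hnne : n ≠ 0 := by positivity
    refine ⟨n⁻¹ • u, ?_, ?_⟩
    · apply unit_of_normSq
      rw [Quaternion.normSq_smul, normSq_def']
      have hcomp : u.re^2 + u.imI^2 + u.imJ^2 + u.imK^2 = n^2 := by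
        rw [hn2]; simp [hu]; linarith
      rw [hcomp]
      field_simp
    · set v : Quaternion ℝ := ⟨0,b,c,d⟩ with hv
      rw [Quaternion.star_smul, smul_mul_assoc, mul_smul_comm, smul_mul_assoc, key]
      change n⁻¹ • n⁻¹ • ((2+2*b) • v) = v
      rw [smul_smul, smul_smul,
        show n⁻¹ * n⁻¹ * (2+2*b) = 1 by field_simp; linear_combination -hn2, one_smul]

lemma commute_qi_iff (u : Quaternion ℝ) : u * qi = qi * u ↔ u.imJ = 0 ∧ u.imK = 0 := by
  obtain ⟨a, b, c, d⟩ := u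
  constructor
  · intro h
    rw [Quaternion.ext_iff] at h
    simp [qi, Quaternion.re_mul, Quaternion.imI_mul, Quaternion.imJ_mul,
      Quaternion.imK_mul, qre_mul, qimI_mul, qimJ_mul, qimK_mul, qre_star, qimI_star, qimJ_star, qimK_star] at h
    obtain ⟨h1, h2⟩ := h
    constructor <;> simp <;> linarith
  · intro ⟨h1, h2⟩
    simp only at h1 h2
    subst h1; subst h2
    ext <;> simp [qi, Quaternion.re_mul, Quaternion.imI_mul, Quaternion.imJ_mul,
      Quaternion.imK_mul, qre_mul, qimI_mul, qimJ_mul, qimK_mul, qre_star, qimI_star, qimJ_star, qimK_star]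

lemma conjRep_spec {x : Quaternion ℝ} (hx : x ∈ S2q) :
    ‖conjRep x‖ = 1 ∧ conjRep x * qi * star (conjRep x) = x := by
  have h := exists_conj x hx.1 hx.2
  rw [conjRep, dif_pos h]
  exact h.choose_spec

end

/-- The map `f : S² × Sp(1) → S² × S²`, `f(x,q) = (x, q x q*)`, is a
principal `S¹`-bundle for the right action `ρ(x,y,λ) = (x, y·𝔮(x,λ))`:  `f` is
continuous, the action `ρ` is free, and `f(x,q) = f(x,q')` if and only if
`q' = q·𝔮(x,λ)` for some `λ ∈ S¹`. -/
theorem stmt6 :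
    Continuous (fun p : S2q × {q : Quaternion ℝ // ‖q‖ = 1} =>
      ((p.1 : Quaternion ℝ),
        (p.2 : Quaternion ℝ) * (p.1 : Quaternion ℝ) * star (p.2 : Quaternion ℝ))) ∧
    ∀ x ∈ S2q,
      (∀ y : Quaternion ℝ, ‖y‖ = 1 → ∀ l ∈ S1q, y * qMap x l = y → l = 1) ∧
      (∀ q q' : Quaternion ℝ, ‖q‖ = 1 → ‖q'‖ = 1 →
        (q * x * star q = q' * x * star q' ↔ ∃ l ∈ S1q, q' = q * qMap x l)) := by
  constructor
  · fun_prop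
  · intro x hx
    obtain ⟨hr1, hr2⟩ := conjRep_spec hx
    set r := conjRep x with hrdef
    have hrs : r * star r = 1 := unit_mul_star hr1
    have hsr : star r * r = 1 := star_mul_unit hr1
    have hxr : star r * x * r = qi := by
      calc star r * x * r = star r * (r * qi * star r) * r := by rw [hr2]
        _ = (star r * r) * (qi * (star r * r)) := by noncomm_ring
        _ = qi := by rw [hsr, one_mul, mul_one]
    have hrq : r * qi = x * r := by
      calc r * qi = (r * qi * star r) * r := by
            rw [mul_assoc, mul_assoc, hsr, mul_one]
        _ = x * r := by rw [hr2]
    have hqr : star r * x = qi * star r := by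
      calc star r * x = star r * (r * qi * star r) := by rw [hr2]
        _ = (star r * r) * (qi * star r) := by noncomm_ring
        _ = qi * star r := by rw [hsr, one_mul]
    constructor
    · intro y hy l hl heq
      have hy0 : y ≠ 0 := by
        intro h; rw [h, norm_zero] at hy; norm_num at hy
      have hw1 : qMap x l = 1 :=
        mul_left_cancel₀ hy0 (by rw [heq, mul_one])
      simp only [qMap, ← hrdef] at hw1
      calc l = (star r * r) * l * (star r * r) := by rw [hsr]; simp
        _ = star r * (r * l * star r) * r := by noncomm_ring
        _ = 1 := by rw [hw1, mul_one, hsr]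
    · intro q q' hq hq'
      constructor
      · intro h
        set u := star q * q' with hu
        have hu1 : ‖u‖ = 1 := by rw [hu, norm_mul, norm_star, hq, hq', one_mul]
        have hux : u * x * star u = x := by
          rw [hu, star_mul, star_star]
          calc star q * q' * x * (star q' * q) = star q * (q' * x * star q') * q := by
                noncomm_ring
            _ = star q * (q * x * star q) * q := by rw [h]
            _ = (star q * q) * (x * (star q * q)) := by noncomm_ring
            _ = x := by rw [star_mul_unit hq, one_mul, mul_one]
        have hux' : u * x = x * u := by
          calc u * x = u * x * (star u * u) := by rw [star_mul_unit hu1, mul_one]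
            _ = (u * x * star u) * u := by noncomm_ring
            _ = x * u := by rw [hux]
        set l := star r * u * r with hl
        have hl1 : ‖l‖ = 1 := by
          rw [hl, norm_mul, norm_mul, norm_star, hr1, hu1]; norm_num
        have hcomm : l * qi = qi * l := by
          calc l * qi = star r * u * (r * qi) := by rw [hl]; noncomm_ring
            _ = star r * (u * x) * r := by rw [hrq]; noncomm_ring
            _ = (star r * x) * (u * r) := by rw [hux']; noncomm_ring
            _ = qi * (star r * u * r) := by rw [hqr]; noncomm_ring
            _ = qi * l := by rw [hl]
        have hjk := (commute_qi_iff l).mp hcomm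
        refine ⟨l, ⟨hjk.1, hjk.2, hl1⟩, ?_⟩
        have hql : qMap x l = u := by
          simp only [qMap, ← hrdef, hl]
          calc r * (star r * u * r) * star r = (r * star r) * (u * (r * star r)) := by
                noncomm_ring
            _ = u := by rw [hrs, one_mul, mul_one]
        rw [hql, hu, ← mul_assoc, unit_mul_star hq, one_mul]
      · rintro ⟨l, hl, rfl⟩
        obtain ⟨hlJ, hlK, hl1⟩ := hl
        have hcomm : l * qi = qi * l := (commute_qi_iff l).mpr ⟨hlJ, hlK⟩
        have hls : l * star l = 1 := unit_mul_star hl1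
        have hw : qMap x l * x * star (qMap x l) = x := by
          simp only [qMap, ← hrdef]
          have hstar : star (r * l * star r) = r * star l * star r := by
            rw [star_mul, star_mul, star_star]; noncomm_ring
          rw [hstar]
          calc (r * l * star r) * x * (r * star l * star r)
              = r * (l * (star r * x * r) * star l) * star r := by noncomm_ring
            _ = r * (l * qi * star l) * star r := by rw [hxr]
            _ = r * (qi * (l * star l)) * star r := by rw [hcomm]; noncomm_ring
            _ = r * qi * star r := by rw [hls, mul_one]
          exact hr2
        rw [star_mul]
        calc q * x * star q = q * (qMap x l * x * star (qMap x l)) * star q := by rw [hw]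
          _ = q * qMap x l * x * (star (qMap x l) * star q) := by noncomm_ring
end

section
/- The loop γ : S¹ × S³ → SU(3) defined by γ(λ, (x₁,x₂)) = diag( [[x₁, -conj(λ)·conj(x₂)],[λx₂, conj(x₁)]], 1 ), where S³ = {(x₁,x₂) ∈ ℂ² : |x₁|² + |x₂|² = 1}, is homotopic, through loops of based maps S³ → SU(3) based at the inclusion ι : SU(2) → SU(3), to the constant loop λ ↦ ι∘γ(1,·). Equivalently, the image under ι of the generator of π₁(SU(2)^{S³}) ≅ ℤ₂ is null-homotopic in the space of based maps S³ → SU(3). -/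
noncomputable section

open Matrix

/-- The loop `γ(λ,(x₁,x₂)) = diag([[x₁, -λ̄x̄₂],[λx₂, x̄₁]], 1)` of maps `S³ → SU(3)`
(written as a bare matrix). -/
def gammaMat (l : ℂ) (x : ℂ × ℂ) : Matrix (Fin 3) (Fin 3) ℂ :=
  !![x.1, -(starRingEnd ℂ l) * (starRingEnd ℂ x.2), 0;
     l * x.2, starRingEnd ℂ x.1, 0;
     0, 0, 1]

/-- The 3-sphere `{(x₁,x₂) ∈ ℂ² : |x₁|² + |x₂|² = 1}`. -/
def Sphere3 : Type := {x : ℂ × ℂ // ‖x.1‖ ^ 2 + ‖x.2‖ ^ 2 = 1}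

instance : TopologicalSpace Sphere3 := by unfold Sphere3; infer_instance

/-- The circle `{λ ∈ ℂ : |λ| = 1}`. -/
def Circle1 : Type := {l : ℂ // ‖l‖ = 1}

instance : TopologicalSpace Circle1 := by unfold Circle1; infer_instance

/-! ### Auxiliary definitions for the homotopy -/

/-- `√(1-|μ|²)` as a complex number. -/
def sqc (μ : ℂ) : ℂ := ((Real.sqrt (1 - ‖μ‖ ^ 2) : ℝ) : ℂ)

/-- The unitary `diag(1, M(μ))` where `M(μ) = [[μ, -√(1-|μ|²)],[√(1-|μ|²), μ̄]]`. -/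
def Hmat (μ : ℂ) : Matrix (Fin 3) (Fin 3) ℂ :=
  !![1, 0, 0; 0, μ, -sqc μ; 0, sqc μ, starRingEnd ℂ μ]

/-- Clamp a real number to `[0,1]`. -/
def clamp01 (t : ℝ) : ℝ := max 0 (min 1 t)

/-- `μ_t(λ) = t·λ + (1-t)` with `t` clamped to `[0,1]`. -/
def muF (t : ℝ) (l : ℂ) : ℂ := (clamp01 t : ℂ) * l + (1 - (clamp01 t : ℂ))

lemma clamp01_nonneg (t : ℝ) : 0 ≤ clamp01 t := le_max_left _ _

lemma clamp01_le_one (t : ℝ) : clamp01 t ≤ 1 := by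
  unfold clamp01
  exact max_le (by norm_num) (min_le_left _ _)

lemma clamp01_zero : clamp01 0 = 0 := by norm_num [clamp01]

lemma clamp01_one : clamp01 1 = 1 := by norm_num [clamp01]

lemma norm_muF_le (t : ℝ) {l : ℂ} (hl : ‖l‖ = 1) : ‖muF t l‖ ≤ 1 := by
  have h0 := clamp01_nonneg t
  have h1 := clamp01_le_one t
  calc ‖muF t l‖ ≤ ‖(clamp01 t : ℂ) * l‖ + ‖(1 - (clamp01 t : ℂ))‖ := norm_add_le _ _
    _ = clamp01 t + (1 - clamp01 t) := by
        rw [norm_mul, hl]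
        have : (1 - (clamp01 t : ℂ)) = ((1 - clamp01 t : ℝ) : ℂ) := by push_cast; ring
        rw [this, Complex.norm_real, Complex.norm_real, Real.norm_of_nonneg h0,
          Real.norm_of_nonneg (by linarith), mul_one]
    _ = 1 := by ring

lemma muF_one (l : ℂ) : muF 1 l = l := by simp [muF, clamp01_one]

lemma muF_zero (l : ℂ) : muF 0 l = 1 := by simp [muF, clamp01_zero]

lemma muF_l_one (t : ℝ) : muF t 1 = 1 := by simp [muF]

lemma sqc_conj (μ : ℂ) : starRingEnd ℂ (sqc μ) = sqc μ := Complex.conj_ofReal _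

lemma sqc_sq {μ : ℂ} (h : ‖μ‖ ≤ 1) : sqc μ * sqc μ = 1 - (‖μ‖ : ℂ) ^ 2 := by
  unfold sqc
  rw [← Complex.ofReal_mul, Real.mul_self_sqrt (by nlinarith [norm_nonneg μ])]
  push_cast
  ring

lemma mul_conj'' (μ : ℂ) : μ * starRingEnd ℂ μ = (‖μ‖ : ℂ) ^ 2 := by
  rw [Complex.mul_conj]
  rw [Complex.normSq_eq_norm_sq]
  push_cast
  rfl

lemma sqc_of_norm_one {μ : ℂ} (h : ‖μ‖ = 1) : sqc μ = 0 := by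
  simp [sqc, h]

lemma Hmat_one : Hmat 1 = 1 := by
  have : sqc 1 = 0 := sqc_of_norm_one (by norm_num)
  ext i j
  fin_cases i <;> fin_cases j <;> simp [Hmat, this, Matrix.one_apply] <;> rfl

lemma Hmat_mul_star {μ : ℂ} (h : ‖μ‖ ≤ 1) : Hmat μ * star (Hmat μ) = 1 := by
  have hs := sqc_sq h
  have hm := mul_conj'' μ
  have hc := sqc_conj μ
  ext i j
  fin_cases i <;> fin_cases j <;>
    simp [Hmat, Matrix.mul_apply, Fin.sum_univ_succ, Matrix.star_apply,
      Matrix.one_apply, Complex.star_def, map_neg, hc] <;>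
    first
      | rfl
      | linear_combination hm + hs
      | ring

lemma Hmat_det {μ : ℂ} (h : ‖μ‖ ≤ 1) : (Hmat μ).det = 1 := by
  have hs := sqc_sq h
  have hm := mul_conj'' μ
  simp [Hmat, Matrix.det_fin_three]
  linear_combination hm + hs

lemma Hmat_mem {μ : ℂ} (h : ‖μ‖ ≤ 1) : Hmat μ ∈ specialUnitaryGroup (Fin 3) ℂ := by
  rw [mem_specialUnitaryGroup_iff]
  exact ⟨(mem_unitaryGroup_iff).2 (Hmat_mul_star h), Hmat_det h⟩

lemma SU_star_mem {A : Matrix (Fin 3) (Fin 3) ℂ} (h : A ∈ specialUnitaryGroup (Fin 3) ℂ) :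
    star A ∈ specialUnitaryGroup (Fin 3) ℂ := by
  rw [mem_specialUnitaryGroup_iff] at h ⊢
  refine ⟨Unitary.star_mem h.1, ?_⟩
  rw [Matrix.star_eq_conjTranspose, Matrix.det_conjTranspose, h.2]
  simp

lemma gamma_one_mem {x : ℂ × ℂ} (hx : ‖x.1‖ ^ 2 + ‖x.2‖ ^ 2 = 1) :
    gammaMat 1 x ∈ specialUnitaryGroup (Fin 3) ℂ := by
  have h1 := mul_conj'' x.1
  have h2 := mul_conj'' x.2
  have hx' : (‖x.1‖ : ℂ) ^ 2 + (‖x.2‖ : ℂ) ^ 2 = 1 := by exact_mod_cast hx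
  rw [mem_specialUnitaryGroup_iff]
  constructor
  · rw [mem_unitaryGroup_iff]
    ext i j
    fin_cases i <;> fin_cases j <;>
      simp [gammaMat, Matrix.mul_apply, Fin.sum_univ_succ, Matrix.star_apply,
        Matrix.one_apply, Complex.star_def, map_neg] <;>
      first
        | rfl
        | linear_combination h1 + h2 + hx'
        | ring
  · simp [gammaMat, Matrix.det_fin_three]
    linear_combination h1 + h2 + hx'

lemma gamma_basepoint : gammaMat 1 ((1 : ℂ), (0 : ℂ)) = 1 := by
  ext i j
  fin_cases i <;> fin_cases j <;> simp [gammaMat, Matrix.one_apply] <;> rfl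

/-- The key conjugation identity: `H(λ) γ(1,x) H(λ)* = γ(λ,x)` for `|λ| = 1`. -/
lemma Hmat_conj_gamma {l : ℂ} (hl : ‖l‖ = 1) (x : ℂ × ℂ) :
    Hmat l * gammaMat 1 x * star (Hmat l) = gammaMat l x := by
  have h0 : sqc l = 0 := sqc_of_norm_one hl
  have hll : l * starRingEnd ℂ l = 1 := by rw [mul_conj'' l, hl]; norm_num
  ext i j
  fin_cases i <;> fin_cases j <;>
    simp [Hmat, gammaMat, Matrix.mul_apply, Fin.sum_univ_succ, Matrix.star_apply,
      Complex.star_def, h0, map_neg] <;>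
    first
      | rfl
      | linear_combination (1 - starRingEnd ℂ x.1) * hll
      | linear_combination (starRingEnd ℂ x.1) * hll
      | linear_combination hll
      | ring

lemma continuous_sqc : Continuous sqc :=
  Complex.continuous_ofReal.comp ((continuous_const.sub (continuous_norm.pow 2)).sqrt)

lemma continuous_Hmat : Continuous Hmat := by
  apply continuous_matrix
  intro i j
  fin_cases i <;> fin_cases j <;> simp [Hmat] <;>
    first
      | exact continuous_const
      | exact continuous_id
      | exact continuous_sqc.neg
      | exact continuous_sqc
      | exact continuous_star

lemma continuous_gamma_one : Continuous (fun x : ℂ × ℂ => gammaMat 1 x) := by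
  apply continuous_matrix
  intro i j
  have hsnd : Continuous fun a : ℂ × ℂ => a.2 := continuous_snd
  have hfst : Continuous fun a : ℂ × ℂ => a.1 := continuous_fst
  have hstar2 : Continuous fun a : ℂ × ℂ => starRingEnd ℂ a.2 :=
    Complex.continuous_conj.comp continuous_snd
  have hstar1 : Continuous fun a : ℂ × ℂ => starRingEnd ℂ a.1 :=
    Complex.continuous_conj.comp continuous_fst
  fin_cases i <;> fin_cases j <;> simp [gammaMat] <;>
    first
      | exact continuous_const
      | exact hfst
      | exact hsnd
      | exact hstar1
      | exact hstar2
      | exact (continuous_const.mul hstar2).neg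
      | exact hstar2.neg
      | exact continuous_const.mul hsnd

lemma continuous_clamp01 : Continuous clamp01 :=
  continuous_const.max (continuous_const.min continuous_id)

lemma continuous_circle_val : Continuous (fun c : Circle1 => c.1) := by
  unfold Circle1; exact continuous_subtype_val

lemma continuous_sphere_val : Continuous (fun c : Sphere3 => c.1) := by
  unfold Sphere3; exact continuous_subtype_val

/-- The loop `γ : S¹ × S³ → SU(3)`,
`γ(λ,(x₁,x₂)) = diag([[x₁, -λ̄x̄₂],[λx₂, x̄₁]], 1)`, is homotopic, through loops of based
maps `S³ → SU(3)` based at the inclusion `ι : SU(2) → SU(3)`, to the constant loop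
`λ ↦ ι ∘ γ(1,·)`.  Equivalently, the image under `ι` of the generator of
`π₁(SU(2)^{S³}) ≅ ℤ₂` is null-homotopic in the space of based maps `S³ → SU(3)`. -/
theorem stmt12 :
    ∃ F : C(ℝ × (Circle1 × Sphere3), Matrix (Fin 3) (Fin 3) ℂ),
      -- the homotopy takes values in SU(3):
      (∀ (t : ℝ) (p : Circle1 × Sphere3), F (t, p) ∈ specialUnitaryGroup (Fin 3) ℂ) ∧
      -- at time 1 it is the loop `γ`:
      (∀ (l : Circle1) (x : Sphere3), F (1, (l, x)) = gammaMat l.1 x.1) ∧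
      -- at time 0 it is the constant loop `λ ↦ γ(1,·)`:
      (∀ (l : Circle1) (x : Sphere3), F (0, (l, x)) = gammaMat 1 x.1) ∧
      -- a homotopy through loops of based maps: the basepoint `(1,0) ∈ S³` goes to `1`:
      (∀ (t : ℝ) (l : Circle1), F (t, (l, ⟨(1, 0), by norm_num⟩)) = 1) ∧
      -- each loop in the homotopy is based at `ι`, i.e. at `γ(1,·)`:
      (∀ (t : ℝ) (x : Sphere3), F (t, (⟨1, by norm_num⟩, x)) = gammaMat 1 x.1) := by
  have hmu : Continuous (fun p : ℝ × (Circle1 × Sphere3) => muF p.1 p.2.1.1) := by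
    unfold muF
    apply Continuous.add
    · exact (Complex.continuous_ofReal.comp
        (continuous_clamp01.comp continuous_fst)).mul
        (continuous_circle_val.comp (continuous_fst.comp continuous_snd))
    · exact continuous_const.sub
        (Complex.continuous_ofReal.comp (continuous_clamp01.comp continuous_fst))
  refine ⟨⟨fun p => Hmat (muF p.1 p.2.1.1) * gammaMat 1 p.2.2.1 *
      star (Hmat (muF p.1 p.2.1.1)), ?_⟩, ?_, ?_, ?_, ?_, ?_⟩
  · exact ((continuous_Hmat.comp hmu).matrix_mul
      (continuous_gamma_one.comp (continuous_sphere_val.comp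
        (continuous_snd.comp continuous_snd)))).matrix_mul
      ((continuous_Hmat.comp hmu).matrix_conjTranspose)
  · intro t p
    have hμ : ‖muF t p.1.1‖ ≤ 1 := norm_muF_le t p.1.2
    exact mul_mem (mul_mem (Hmat_mem hμ) (gamma_one_mem p.2.2)) (SU_star_mem (Hmat_mem hμ))
  · intro l x
    simp only [ContinuousMap.coe_mk, muF_one]
    exact Hmat_conj_gamma l.2 x.1
  · intro l x
    simp only [ContinuousMap.coe_mk, muF_zero, Hmat_one]
    simp
  · intro t l
    simp only [ContinuousMap.coe_mk]
    rw [gamma_basepoint, mul_one]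
    exact Hmat_mul_star (norm_muF_le t l.2)
  · intro t x
    simp only [ContinuousMap.coe_mk]
    rw [muF_l_one, Hmat_one]
    simp

end
end

section
/- For the Ramadas map K : SU(2) → SU(2) defined on [[a,b],[-conj(b),conj(a)]] by K(A) = (|a|⁴+|b|⁴)^{-1/2}·[[a², -conj(b)²],[b², conj(a)²]], one has K(diag(λ, conj(λ))·A) = K(A)·diag(λ², conj(λ)²) for all unit complex numbers λ and all A ∈ SU(2). In particular K is well defined: |a|⁴ + |b|⁴ > 0 and K(A) ∈ SU(2). -/
noncomputable section

open Matrix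

/-- The generic element `[[a, b], [-b̄, ā]]` of `SU(2)`. -/
def Amat (a b : ℂ) : Matrix (Fin 2) (Fin 2) ℂ :=
  !![a, b; -(starRingEnd ℂ b), starRingEnd ℂ a]

/-- The Ramadas map `K : SU(2) → SU(2)`,
`K(A) = (|a|⁴+|b|⁴)^{-1/2}·[[a², -b̄²],[b², ā²]]`. -/
def Kmat (a b : ℂ) : Matrix (Fin 2) (Fin 2) ℂ :=
  (((Real.sqrt (‖a‖ ^ 4 + ‖b‖ ^ 4))⁻¹ : ℝ) : ℂ) •
    !![a ^ 2, -(starRingEnd ℂ b) ^ 2; b ^ 2, (starRingEnd ℂ a) ^ 2]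

/-- For the Ramadas map `K` one has
`K(diag(λ, λ̄)·A) = K(A)·diag(λ², λ̄²)` for all unit complex `λ` and all `A ∈ SU(2)`;
in particular `K` is well defined: `|a|⁴ + |b|⁴ > 0` and `K(A) ∈ SU(2)`. -/
theorem stmt13 (a b l : ℂ)
    (hab : ‖a‖ ^ 2 + ‖b‖ ^ 2 = 1) (hl : ‖l‖ = 1) :
    0 < ‖a‖ ^ 4 + ‖b‖ ^ 4 ∧
    Kmat a b ∈ specialUnitaryGroup (Fin 2) ℂ ∧
    -- `diag(λ, λ̄) · A` is the `SU(2)` matrix with entries `(λa, λb)` …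
    !![l, 0; 0, starRingEnd ℂ l] * Amat a b = Amat (l * a) (l * b) ∧
    -- … and `K(diag(λ, λ̄)·A) = K(A)·diag(λ², λ̄²)`:
    Kmat (l * a) (l * b) = Kmat a b * !![l ^ 2, 0; 0, (starRingEnd ℂ l) ^ 2] := by
  have hpos : 0 < ‖a‖ ^ 4 + ‖b‖ ^ 4 := by
    nlinarith [norm_nonneg a, norm_nonneg b,
      sq_nonneg (‖a‖ ^ 2 - ‖b‖ ^ 2)]
  have ha : a * starRingEnd ℂ a = ((‖a‖ ^ 2 : ℝ) : ℂ) := by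
    rw [Complex.mul_conj, Complex.sq_norm]
  have hb : b * starRingEnd ℂ b = ((‖b‖ ^ 2 : ℝ) : ℂ) := by
    rw [Complex.mul_conj, Complex.sq_norm]
  have hr : (Real.sqrt (‖a‖ ^ 4 + ‖b‖ ^ 4)) ^ 2
      = ‖a‖ ^ 4 + ‖b‖ ^ 4 := Real.sq_sqrt hpos.le
  have hrne : (Real.sqrt (‖a‖ ^ 4 + ‖b‖ ^ 4)) ≠ 0 :=
    (Real.sqrt_pos.mpr hpos).ne'
  have hrne' : ((Real.sqrt (‖a‖ ^ 4 + ‖b‖ ^ 4) : ℝ) : ℂ) ≠ 0 := by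
    exact_mod_cast hrne
  have key : ((Real.sqrt (‖a‖ ^ 4 + ‖b‖ ^ 4) : ℝ) : ℂ)⁻¹ ^ 2 *
      ((‖a‖ ^ 4 + ‖b‖ ^ 4 : ℝ) : ℂ) = 1 := by
    field_simp
    exact_mod_cast hr.symm
  have e : a ^ 2 * starRingEnd ℂ a ^ 2 + starRingEnd ℂ b ^ 2 * b ^ 2
      = ((‖a‖ ^ 4 + ‖b‖ ^ 4 : ℝ) : ℂ) := by
    calc a ^ 2 * starRingEnd ℂ a ^ 2 + starRingEnd ℂ b ^ 2 * b ^ 2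
        = (a * starRingEnd ℂ a) ^ 2 + (b * starRingEnd ℂ b) ^ 2 := by ring
      _ = _ := by rw [ha, hb]; push_cast; ring
  have habs : ‖l * a‖ = ‖a‖ := by simp [hl]
  have hbbs : ‖l * b‖ = ‖b‖ := by simp [hl]
  refine ⟨hpos, ?_, ?_, ?_⟩
  · rw [Matrix.mem_specialUnitaryGroup_iff]
    constructor
    · rw [Matrix.mem_unitaryGroup_iff]
      ext i j
      fin_cases i <;> fin_cases j <;>
        simp [Kmat, Matrix.mul_apply, Fin.sum_univ_two, Matrix.star_apply] <;>
        ring_nf <;>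
        linear_combination ((Real.sqrt (‖a‖ ^ 4 + ‖b‖ ^ 4) : ℝ) : ℂ)⁻¹ ^ 2 * e + key
    · rw [Kmat, Matrix.det_smul, Matrix.det_fin_two_of]
      simp only [Fintype.card_fin]
      push_cast
      linear_combination e * ((Real.sqrt (‖a‖ ^ 4 + ‖b‖ ^ 4) : ℝ) : ℂ)⁻¹ ^ 2 + key
  · ext i j
    fin_cases i <;> fin_cases j <;>
      simp [Amat, Matrix.mul_apply, Fin.sum_univ_two, mul_comm]
  · have h2 : Kmat (l * a) (l * b) = (((Real.sqrt (‖a‖ ^ 4 + ‖b‖ ^ 4))⁻¹ : ℝ) : ℂ) •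
      !![(l*a) ^ 2, -(starRingEnd ℂ (l*b)) ^ 2; (l*b) ^ 2, (starRingEnd ℂ (l*a)) ^ 2] := by
      rw [Kmat, habs, hbbs]
    rw [h2]
    ext i j
    fin_cases i <;> fin_cases j <;>
      simp [Kmat, Matrix.mul_apply, Fin.sum_univ_two, mul_pow, _root_.map_mul] <;> ring

end
end
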